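/- Theorem 1: For an extended cyclic code C with exponent set S_C, the cyclic derivative descendants D(C, β) in all directions β ∈ F^* are the same code, denoted D(C), namely the extended cyclic code whose exponent set is ∪_{s∈cr(S_C)} cc(P(s)). -/

import Mathlib

/-!
In characteristic `2`, Lucas' theorem gives `(x + β) ^ j - x ^ j = ∑_{k ∈ P(j)} β ^ (j - k) x ^ k`,
so the derivative of a codeword of `C(S)` only involves exponents in `P(j)`, `j ∈ S`. Doubling
modulo `n = 2 ^ m - 1` rotates binary digits, hence maps `P(j)` onto `P(2j mod n)`; therefore these
exponents make up `⋃_{s ∈ cr(S)} cc(P(s))`, and the conjugacy constraint `B_{2k} = B_k ^ 2` passes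
to the coefficients of the derivative. Conversely, the derivative of the trace codeword
`x ↦ Tr(a x ^ s)` has at `k ∈ P(s)` the coefficient `L(a)`, where `L` is a linearized polynomial of
degree `< 2 ^ m` whose coefficient of `X` is `β ^ (s - k) ≠ 0`. Choosing `a` with `L(a) ≠ 0`,
uniqueness of the polynomial of degree `< 2 ^ m` representing a function `F → F` forces `k` into
every exponent set whose code contains all derivatives.
-/

/-- Hamming weight of the `m`-bit binary expansion of `s`. -/
def wtm (m s : ℕ) : ℕ := ((Finset.range m).filter fun j => s.testBit j).card

/-- `Pset s`: the set of nonnegative integers whose binary expansion is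
properly covered by that of `s`. -/
def Pset (s : ℕ) : Finset ℕ :=
  (Finset.range (s + 1)).filter fun k => k ||| s = s ∧ k ≠ s

/-- The cyclotomic coset `C_s` modulo `n = 2^m - 1`. -/
def cycCoset (n m s : ℕ) : Finset ℕ := (Finset.range m).image fun j => 2 ^ j * s % n

/-- `cc S`: union of all cyclotomic cosets meeting `S`. -/
def ccSet (n m : ℕ) (S : Finset ℕ) : Finset ℕ := S.biUnion (cycCoset n m)

/-- `cr S`: the set of coset representatives (minimal elements of the cosets) of `S`. -/
def crSet (n m : ℕ) (S : Finset ℕ) : Finset ℕ :=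
  (ccSet n m S).filter fun s => ∀ t ∈ cycCoset n m s, s ≤ t

/-- `S` is an exponent set: a set of residues mod `n` closed under doubling mod `n`. -/
def IsExpSet (n : ℕ) (S : Finset ℕ) : Prop :=
  (∀ j ∈ S, j < n) ∧ ∀ j ∈ S, 2 * j % n ∈ S

/-- The extended cyclic code of length `2^m` with exponent set `S`. -/
def extCyclicCode {F : Type*} [Field F] (n : ℕ) (S : Finset ℕ) : Set (F → F) :=
  { c | ∃ A : ℕ → F, (∀ j ∈ S, A (2 * j % n) = A j ^ 2) ∧
      ∀ x : F, c x = ∑ j ∈ S, A j * x ^ j }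

/-- The set of derivatives of the codewords of `C` in direction `β`. -/
def derivSet {F : Type*} [Field F] (β : F) (C : Set (F → F)) : Set (F → F) :=
  { d | ∃ c ∈ C, d = fun x => c (x + β) - c x }

/-- Minimum Hamming distance (= minimum weight) of a code. -/
noncomputable def minDist {F : Type*} [Field F] [Fintype F] [DecidableEq F]
    (C : Set (F → F)) : ℕ :=
  sInf { w | ∃ c ∈ C, c ≠ (0 : F → F) ∧ hammingNorm c = w }

open Finset Polynomial

namespace Nat

theorem or_eq_right_iff_forall_testBit {k t : ℕ} :
    k ||| t = t ↔ ∀ i, k.testBit i → t.testBit i := by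
  refine ⟨fun h i hk => by rw [← h, testBit_or, hk, Bool.true_or], fun h => ?_⟩
  refine eq_of_testBit_eq fun i => ?_
  cases hk : k.testBit i <;> simp [testBit_or, hk, h i]

theorem or_eq_right_iff_mod_two_div_two {k t : ℕ} :
    k ||| t = t ↔ (k % 2 = 1 → t % 2 = 1) ∧ k / 2 ||| t / 2 = t / 2 := by
  simp only [or_eq_right_iff_forall_testBit]
  refine ⟨fun h => ⟨?_, fun i => ?_⟩, fun ⟨h0, h⟩ i => ?_⟩
  · simpa [testBit_zero] using h 0
  · simpa [testBit_add_one] using h (i + 1)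
  · cases i with
    | zero => simpa [testBit_zero] using h0
    | succ i => simpa [testBit_add_one] using h i

theorem odd_choose_iff_or_eq (t k : ℕ) : Odd (t.choose k) ↔ k ||| t = t := by
  induction k using Nat.strong_induction_on generalizing t with
  | _ k ih =>
    rcases Nat.eq_zero_or_pos k with rfl | hk
    · simp
    have lucas : t.choose k % 2 = ((t % 2).choose (k % 2) * (t / 2).choose (k / 2)) % 2 :=
      Choose.choose_modEq_choose_mod_mul_choose_div_nat
    have low : Odd ((t % 2).choose (k % 2)) ↔ (k % 2 = 1 → t % 2 = 1) := by
      rcases Nat.mod_two_eq_zero_or_one k with hk2 | hk2 <;>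
        rcases Nat.mod_two_eq_zero_or_one t with ht2 | ht2 <;> simp [hk2, ht2]
    rw [or_eq_right_iff_mod_two_div_two (k := k), Nat.odd_iff, lucas, ← Nat.odd_iff, Nat.odd_mul,
      low, ih _ (Nat.div_lt_self hk one_lt_two)]

end Nat

theorem mem_Pset {k s : ℕ} : k ∈ Pset s ↔ k ||| s = s ∧ k ≠ s := by
  refine ⟨fun h => (mem_filter.mp h).2, fun h => mem_filter.mpr ⟨?_, h⟩⟩
  have : k ≤ s := h.1 ▸ Nat.left_le_or
  exact mem_range.mpr (Nat.lt_succ_of_le this)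

theorem lt_of_mem_Pset {k s : ℕ} (h : k ∈ Pset s) : k < s :=
  lt_of_le_of_ne ((mem_Pset.mp h).1 ▸ Nat.left_le_or) (mem_Pset.mp h).2

theorem CharTwo.natCast_choose {R : Type*} [CommRing R] [CharP R 2] (t k : ℕ) :
    (t.choose k : R) = if k ||| t = t then 1 else 0 := by
  split_ifs with h <;> rw [← Nat.odd_choose_iff_or_eq] at h
  · obtain ⟨q, hq⟩ := h
    simp [hq]
  · exact (CharP.cast_eq_zero_iff R 2 _).mpr (Nat.not_odd_iff_even.mp h).two_dvd

theorem CharTwo.add_pow_sub_pow {R : Type*} [CommRing R] [CharP R 2] (x β : R) (j : ℕ) :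
    (x + β) ^ j - x ^ j = ∑ k ∈ Pset j, β ^ (j - k) * x ^ k := by
  have split : ∀ k ∈ range (j + 1), x ^ k * β ^ (j - k) * (j.choose k : R)
      = (if k ||| j = j ∧ k ≠ j then β ^ (j - k) * x ^ k else 0)
        + if k = j then x ^ k else 0 := by
    intro k _
    rw [CharTwo.natCast_choose]
    by_cases hkj : k = j
    · simp [hkj, Nat.or_self]
    · by_cases h : k ||| j = j <;> simp [h, hkj, mul_comm]
  rw [add_pow, sum_congr rfl split, sum_add_distrib, ← sum_filter, sum_ite_eq',
    if_pos (self_mem_range_succ j), add_sub_cancel_right]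
  rfl

section Doubling

variable {m n : ℕ}

theorem two_pow_modEq_one (hn : n = 2 ^ m - 1) : 2 ^ m ≡ 1 [MOD n] :=
  ((Nat.modEq_iff_dvd' Nat.one_le_two_pow).mpr (hn ▸ dvd_rfl)).symm

theorem pos_of_eq_two_pow_sub_one (hm : 0 < m) (hn : n = 2 ^ m - 1) : 0 < n :=
  hn ▸ Nat.sub_pos_of_lt (Nat.one_lt_two_pow hm.ne')

theorem two_pow_mul_two_pow_mul_mod (i j a : ℕ) :
    2 ^ i * (2 ^ j * a % n) % n = 2 ^ (i + j) * a % n := by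
  rw [Nat.mul_mod_mod, ← mul_assoc, ← pow_add]

theorem two_pow_succ_mul_mod (i a : ℕ) : 2 ^ (i + 1) * a % n = 2 * (2 ^ i * a % n) % n := by
  rw [Nat.mul_mod_mod, pow_succ', mul_assoc]

theorem two_pow_mul_mod_eq_mod_period (hn : n = 2 ^ m - 1) (i a : ℕ) :
    2 ^ i * a % n = 2 ^ (i % m) * a % n := by
  have h := ((two_pow_modEq_one hn).pow (i / m)).mul_left (2 ^ (i % m) * a)
  rwa [one_pow, mul_one, ← pow_mul, mul_right_comm, ← pow_add, Nat.mod_add_div] at h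

theorem two_pow_mul_two_pow_mul_mod_of_add_eq (hn : n = 2 ^ m - 1) {i j a : ℕ} (hij : i + j = m)
    (ha : a < n) : 2 ^ i * (2 ^ j * a % n) % n = a := by
  rw [two_pow_mul_two_pow_mul_mod, hij, ((two_pow_modEq_one hn).mul_right a), one_mul,
    Nat.mod_eq_of_lt ha]

theorem two_pow_pred_mul_two_mul_mod (hm : 0 < m) (hn : n = 2 ^ m - 1) {a : ℕ} (ha : a < n) :
    2 ^ (m - 1) * (2 * a % n) % n = a := by
  simpa using two_pow_mul_two_pow_mul_mod_of_add_eq hn (Nat.sub_add_cancel hm) ha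

theorem two_mul_mod_injOn (hm : 0 < m) (hn : n = 2 ^ m - 1) :
    Set.InjOn (fun a => 2 * a % n) (Set.Iio n) := by
  intro a ha b hb hab
  rw [← two_pow_pred_mul_two_mul_mod hm hn ha, ← two_pow_pred_mul_two_mul_mod hm hn hb]
  exact congrArg (fun x => 2 ^ (m - 1) * x % n) hab

theorem div_two_pow_pred_lt_two (hm : 0 < m) (hn : n = 2 ^ m - 1) {a : ℕ} (ha : a < n) :
    a / 2 ^ (m - 1) < 2 := by
  have : 2 ^ m = 2 * 2 ^ (m - 1) := by rw [← pow_succ', Nat.sub_add_cancel hm]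
  exact (Nat.div_lt_iff_lt_mul (Nat.two_pow_pos _)).mpr (by omega)

/-- Doubling modulo `2 ^ m - 1` moves the top binary digit of an `m`-digit number to the bottom. -/
theorem two_mul_mod_eq (hm : 0 < m) (hn : n = 2 ^ m - 1) {a : ℕ} (ha : a < n) :
    2 * a % n = 2 * (a % 2 ^ (m - 1)) + a / 2 ^ (m - 1) := by
  have hpow : 2 ^ m = 2 * 2 ^ (m - 1) := by rw [← pow_succ', Nat.sub_add_cancel hm]
  have hdiv := Nat.div_add_mod a (2 ^ (m - 1))
  have hmod := Nat.mod_lt a (Nat.two_pow_pos (m - 1))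
  have htop := div_two_pow_pred_lt_two hm hn ha
  refine ((Nat.div_mod_unique (b := n) (d := a / 2 ^ (m - 1)) (by omega)).mpr ?_).2
  generalize a / 2 ^ (m - 1) = h at *
  interval_cases h <;> omega

theorem testBit_two_mul_mod (hm : 0 < m) (hn : n = 2 ^ m - 1) {a : ℕ} (ha : a < n) (i : ℕ) :
    (2 * a % n).testBit i =
      if i = 0 then a.testBit (m - 1) else decide (i - 1 < m - 1) && a.testBit (i - 1) := by
  have bits := Nat.testBit_two_pow_mul_add (a % 2 ^ (m - 1)) (i := 1)
    (by simpa only [pow_one] using div_two_pow_pred_lt_two hm hn ha) i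
  rw [pow_one] at bits
  rw [two_mul_mod_eq hm hn ha, bits, Nat.testBit_div_two_pow, Nat.testBit_mod_two_pow]
  rcases i with _ | i <;> simp

theorem or_two_mul_mod_eq (hm : 0 < m) (hn : n = 2 ^ m - 1) {k j : ℕ} (hj : j < n)
    (h : k ||| j = j) : 2 * k % n ||| 2 * j % n = 2 * j % n := by
  have hk : k < n := lt_of_le_of_lt (h ▸ Nat.left_le_or) hj
  rw [Nat.or_eq_right_iff_forall_testBit] at h ⊢
  intro i
  rw [testBit_two_mul_mod hm hn hk, testBit_two_mul_mod hm hn hj]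
  split_ifs
  · exact h _
  · simpa using fun hi hk => ⟨hi, h _ hk⟩

end Doubling

section Cosets

variable {m n : ℕ}

theorem two_mul_mod_mem_Pset (hm : 0 < m) (hn : n = 2 ^ m - 1) {k j : ℕ} (hj : j < n)
    (hk : k ∈ Pset j) : 2 * k % n ∈ Pset (2 * j % n) := by
  obtain ⟨hor, hne⟩ := mem_Pset.mp hk
  refine mem_Pset.mpr ⟨or_two_mul_mod_eq hm hn hj hor, fun h => hne ?_⟩
  exact two_mul_mod_injOn hm hn ((lt_of_mem_Pset hk).trans hj) hj h

theorem two_pow_mul_mod_mem_Pset (hm : 0 < m) (hn : n = 2 ^ m - 1) {k j : ℕ} (hj : j < n)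
    (hk : k ∈ Pset j) (i : ℕ) : 2 ^ i * k % n ∈ Pset (2 ^ i * j % n) := by
  induction i with
  | zero => rwa [pow_zero, one_mul, one_mul, Nat.mod_eq_of_lt hj,
      Nat.mod_eq_of_lt ((lt_of_mem_Pset hk).trans hj)]
  | succ i ih =>
    rw [two_pow_succ_mul_mod, two_pow_succ_mul_mod]
    exact two_mul_mod_mem_Pset hm hn (Nat.mod_lt _ (pos_of_eq_two_pow_sub_one hm hn)) ih

theorem two_mul_mod_mem_Pset_iff (hm : 0 < m) (hn : n = 2 ^ m - 1) {k j : ℕ} (hk : k < n)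
    (hj : j < n) : 2 * k % n ∈ Pset (2 * j % n) ↔ k ∈ Pset j := by
  refine ⟨fun h => ?_, two_mul_mod_mem_Pset hm hn hj⟩
  have := two_pow_mul_mod_mem_Pset hm hn (Nat.mod_lt _ (pos_of_eq_two_pow_sub_one hm hn)) h (m - 1)
  rwa [two_pow_pred_mul_two_mul_mod hm hn hk, two_pow_pred_mul_two_mul_mod hm hn hj] at this

theorem mem_cycCoset {s t : ℕ} : t ∈ cycCoset n m s ↔ ∃ i < m, 2 ^ i * s % n = t := by
  simp [cycCoset]

theorem two_pow_mul_mod_mem_cycCoset (hm : 0 < m) (hn : n = 2 ^ m - 1) (s i : ℕ) :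
    2 ^ i * s % n ∈ cycCoset n m s :=
  mem_cycCoset.mpr ⟨i % m, Nat.mod_lt i hm, (two_pow_mul_mod_eq_mod_period hn i s).symm⟩

theorem lt_of_mem_cycCoset (hm : 0 < m) (hn : n = 2 ^ m - 1) {s t : ℕ}
    (ht : t ∈ cycCoset n m s) : t < n := by
  obtain ⟨i, -, rfl⟩ := mem_cycCoset.mp ht
  exact Nat.mod_lt _ (pos_of_eq_two_pow_sub_one hm hn)

theorem two_mul_mod_mem_cycCoset (hm : 0 < m) (hn : n = 2 ^ m - 1) {s t : ℕ}
    (ht : t ∈ cycCoset n m s) : 2 * t % n ∈ cycCoset n m s := by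
  obtain ⟨i, -, rfl⟩ := mem_cycCoset.mp ht
  rw [← two_pow_succ_mul_mod]
  exact two_pow_mul_mod_mem_cycCoset hm hn s (i + 1)

theorem cycCoset_subset_of_mem (hm : 0 < m) (hn : n = 2 ^ m - 1) {s t : ℕ}
    (ht : t ∈ cycCoset n m s) : cycCoset n m t ⊆ cycCoset n m s := by
  obtain ⟨i, -, rfl⟩ := mem_cycCoset.mp ht
  intro u hu
  obtain ⟨l, -, rfl⟩ := mem_cycCoset.mp hu
  rw [two_pow_mul_two_pow_mul_mod]
  exact two_pow_mul_mod_mem_cycCoset hm hn s _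

theorem mem_cycCoset_comm (hm : 0 < m) (hn : n = 2 ^ m - 1) {s t : ℕ} (hs : s < n)
    (ht : t ∈ cycCoset n m s) : s ∈ cycCoset n m t := by
  obtain ⟨i, hi, rfl⟩ := mem_cycCoset.mp ht
  have := two_pow_mul_mod_mem_cycCoset hm hn (2 ^ i * s % n) (m - i)
  rwa [two_pow_mul_two_pow_mul_mod_of_add_eq hn (Nat.sub_add_cancel hi.le) hs] at this

end Cosets

section ExpSets

variable {m n : ℕ} {S : Finset ℕ}

theorem IsExpSet.two_pow_mul_mod_mem (hS : IsExpSet n S) {j : ℕ} (hj : j ∈ S) (i : ℕ) :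
    2 ^ i * j % n ∈ S := by
  induction i with
  | zero => rwa [pow_zero, one_mul, Nat.mod_eq_of_lt (hS.1 j hj)]
  | succ i ih => rw [two_pow_succ_mul_mod]; exact hS.2 _ ih

theorem IsExpSet.mem_of_two_mul_mod_mem (hm : 0 < m) (hn : n = 2 ^ m - 1) (hS : IsExpSet n S)
    {j : ℕ} (hj : j < n) (h : 2 * j % n ∈ S) : j ∈ S := by
  simpa only [two_pow_pred_mul_two_mul_mod hm hn hj] using hS.two_pow_mul_mod_mem h (m - 1)

theorem IsExpSet.image_two_mul_mod (hm : 0 < m) (hn : n = 2 ^ m - 1) (hS : IsExpSet n S) :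
    S.image (fun j => 2 * j % n) = S := by
  refine eq_of_subset_of_card_le (fun t ht => ?_) ?_
  · obtain ⟨j, hj, rfl⟩ := mem_image.mp ht
    exact hS.2 j hj
  · rw [card_image_of_injOn ((two_mul_mod_injOn hm hn).mono fun j hj => hS.1 j hj)]

theorem IsExpSet.ccSet_subset (hS : IsExpSet n S) : ccSet n m S ⊆ S := by
  intro t ht
  obtain ⟨j, hj, ht⟩ := mem_biUnion.mp ht
  obtain ⟨i, -, rfl⟩ := mem_cycCoset.mp ht
  exact hS.two_pow_mul_mod_mem hj i

theorem IsExpSet.crSet_subset (hS : IsExpSet n S) : crSet n m S ⊆ S :=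
  (filter_subset _ _).trans hS.ccSet_subset

theorem IsExpSet.exists_mem_crSet (hm : 0 < m) (hn : n = 2 ^ m - 1) (hS : IsExpSet n S)
    {j : ℕ} (hj : j ∈ S) : ∃ s ∈ crSet n m S, j ∈ cycCoset n m s := by
  have hne : (cycCoset n m j).Nonempty := ⟨_, two_pow_mul_mod_mem_cycCoset hm hn j 0⟩
  have hs : (cycCoset n m j).min' hne ∈ cycCoset n m j := min'_mem _ hne
  refine ⟨_, mem_filter.mpr ⟨mem_biUnion.mpr ⟨j, hj, hs⟩, fun t ht => ?_⟩,
    mem_cycCoset_comm hm hn (hS.1 j hj) hs⟩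
  exact min'_le _ t (cycCoset_subset_of_mem hm hn hs ht)

theorem isExpSet_ccSet (hm : 0 < m) (hn : n = 2 ^ m - 1) (U : Finset ℕ) :
    IsExpSet n (ccSet n m U) := by
  constructor <;> intro t ht <;> obtain ⟨s, hs, hts⟩ := mem_biUnion.mp ht
  · exact lt_of_mem_cycCoset hm hn hts
  · exact mem_biUnion.mpr ⟨s, hs, two_mul_mod_mem_cycCoset hm hn hts⟩

theorem isExpSet_biUnion {ι : Type*} {I : Finset ι} {f : ι → Finset ℕ}
    (h : ∀ i ∈ I, IsExpSet n (f i)) : IsExpSet n (I.biUnion f) := by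
  constructor <;> intro j hj <;> obtain ⟨i, hi, hj⟩ := mem_biUnion.mp hj
  · exact (h i hi).1 j hj
  · exact mem_biUnion.mpr ⟨i, hi, (h i hi).2 j hj⟩

theorem extCyclicCode_mono {F : Type*} [Field F] (hm : 0 < m) (hn : n = 2 ^ m - 1)
    {T S' : Finset ℕ} (hT : IsExpSet n T) (hS' : ∀ j ∈ S', j < n) (h : T ⊆ S') :
    (extCyclicCode n T : Set (F → F)) ⊆ extCyclicCode n S' := by
  classical
  rintro c ⟨A, hA, hc⟩
  refine ⟨fun j => if j ∈ T then A j else 0, fun j hj => ?_, fun x => ?_⟩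
  · by_cases hjT : j ∈ T
    · simp [hjT, hT.2 j hjT, hA j hjT]
    · have : 2 * j % n ∉ T := fun h2 => hjT (hT.mem_of_two_mul_mod_mem hm hn (hS' j hj) h2)
      simp [hjT, this]
  · simp [hc, ite_mul, sum_ite_mem, inter_eq_right.mpr h]

end ExpSets

def derivExpSet (n m : ℕ) (S : Finset ℕ) : Finset ℕ :=
  (crSet n m S).biUnion fun s => ccSet n m (Pset s)

section DerivExpSet

variable {m n : ℕ} {S : Finset ℕ}

theorem isExpSet_derivExpSet (hm : 0 < m) (hn : n = 2 ^ m - 1) :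
    IsExpSet n (derivExpSet n m S) :=
  isExpSet_biUnion fun _ _ => isExpSet_ccSet hm hn _

theorem Pset_subset_derivExpSet (hm : 0 < m) (hn : n = 2 ^ m - 1) (hS : IsExpSet n S)
    {j : ℕ} (hj : j ∈ S) : Pset j ⊆ derivExpSet n m S := by
  have hjn := hS.1 j hj
  obtain ⟨s, hs, hjs⟩ := hS.exists_mem_crSet hm hn hj
  obtain ⟨i, hi, rfl⟩ := mem_cycCoset.mp hjs
  intro k hk
  have hkn : k < n := (lt_of_mem_Pset hk).trans hjn
  have hk' := two_pow_mul_mod_mem_Pset hm hn hjn hk (m - i)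
  rw [two_pow_mul_two_pow_mul_mod_of_add_eq hn (Nat.sub_add_cancel hi.le)
    (hS.1 s (hS.crSet_subset hs))] at hk'
  refine mem_biUnion.mpr ⟨s, hs, mem_biUnion.mpr ⟨_, hk', ?_⟩⟩
  have := two_pow_mul_mod_mem_cycCoset hm hn (2 ^ (m - i) * k % n) i
  rwa [two_pow_mul_two_pow_mul_mod_of_add_eq hn (Nat.add_sub_cancel' hi.le) hkn] at this

theorem derivExpSet_subset {S' : Finset ℕ} (hS : IsExpSet n S) (hS' : IsExpSet n S')
    (h : ∀ s ∈ S, Pset s ⊆ S') : derivExpSet n m S ⊆ S' := by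
  intro t ht
  obtain ⟨s, hs, ht⟩ := mem_biUnion.mp ht
  exact hS'.ccSet_subset (biUnion_subset_biUnion_of_subset_left _ (h s (hS.crSet_subset hs)) ht)

end DerivExpSet

section Derivative

def derivCoeff {R : Type*} [CommRing R] (β : R) (S : Finset ℕ) (A : ℕ → R) (k : ℕ) : R :=
  ∑ j ∈ S, A j * if k ∈ Pset j then β ^ (j - k) else 0

theorem sum_add_pow_sub_sum_pow {R : Type*} [CommRing R] [CharP R 2] {S U : Finset ℕ}
    (hU : ∀ j ∈ S, Pset j ⊆ U) (A : ℕ → R) (β x : R) :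
    ∑ j ∈ S, A j * (x + β) ^ j - ∑ j ∈ S, A j * x ^ j = ∑ k ∈ U, derivCoeff β S A k * x ^ k := by
  have expand : ∀ j ∈ S, A j * ((x + β) ^ j - x ^ j)
      = ∑ k ∈ U, (A j * if k ∈ Pset j then β ^ (j - k) else 0) * x ^ k := by
    intro j hj
    have mul_ite_mul : ∀ k, (A j * if k ∈ Pset j then β ^ (j - k) else 0) * x ^ k
        = if k ∈ Pset j then A j * (β ^ (j - k) * x ^ k) else 0 := by
      intro k
      split_ifs <;> ring
    simp_rw [mul_ite_mul, sum_ite_mem, inter_eq_right.mpr (hU j hj), CharTwo.add_pow_sub_pow,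
      mul_sum]
  rw [← sum_sub_distrib]
  simp_rw [← mul_sub]
  rw [sum_congr rfl expand, sum_comm]
  simp_rw [derivCoeff, sum_mul]

variable {F : Type*} [Field F] [CharP F 2] {m n : ℕ} {S : Finset ℕ}

theorem derivCoeff_two_mul_mod (hm : 0 < m) (hn : n = 2 ^ m - 1) (hS : IsExpSet n S)
    {A : ℕ → F} (hA : ∀ j ∈ S, A (2 * j % n) = A j ^ 2) {β : F} (hβ : β ^ n = 1) {k : ℕ}
    (hk : k < n) : derivCoeff β S A (2 * k % n) = derivCoeff β S A k ^ 2 := by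
  have hβ0 : β ≠ 0 := by
    rintro rfl
    simp [zero_pow (pos_of_eq_two_pow_sub_one hm hn).ne'] at hβ
  have term : ∀ j ∈ S, (A (2 * j % n) *
      if 2 * k % n ∈ Pset (2 * j % n) then β ^ (2 * j % n - 2 * k % n) else 0)
      = (A j * if k ∈ Pset j then β ^ (j - k) else 0) ^ 2 := by
    intro j hj
    simp only [two_mul_mod_mem_Pset_iff hm hn hk (hS.1 j hj), mul_pow, hA j hj, ite_pow]
    split_ifs with hkj
    · have hle := lt_of_mem_Pset (two_mul_mod_mem_Pset hm hn (hS.1 j hj) hkj)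
      rw [pow_sub₀ _ hβ0 hle.le, ← pow_eq_pow_mod _ hβ, ← pow_eq_pow_mod _ hβ,
        pow_sub₀ _ hβ0 (lt_of_mem_Pset hkj).le]
      ring
    · simp
  unfold derivCoeff
  conv_lhs => rw [← hS.image_two_mul_mod hm hn]
  rw [sum_image ((two_mul_mod_injOn hm hn).mono fun j hj => hS.1 j hj), CharTwo.sum_sq]
  exact sum_congr rfl term

theorem derivSet_subset_extCyclicCode (hm : 0 < m) (hn : n = 2 ^ m - 1) (hS : IsExpSet n S)
    {β : F} (hβ : β ^ n = 1) :
    derivSet β (extCyclicCode n S) ⊆ extCyclicCode n (derivExpSet n m S) := by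
  rintro _ ⟨c, ⟨A, hA, hc⟩, rfl⟩
  refine ⟨derivCoeff β S A, fun k hk => ?_, fun x => ?_⟩
  · exact derivCoeff_two_mul_mod hm hn hS hA hβ ((isExpSet_derivExpSet hm hn).1 k hk)
  · show c (x + β) - c x = _
    rw [hc, hc]
    exact sum_add_pow_sub_sum_pow (fun j hj => Pset_subset_derivExpSet hm hn hS hj) A β x

end Derivative

theorem Finset.sum_range_succ_eq_sum_range {M : Type*} [AddCommGroup M] (f : ℕ → M) {m : ℕ}
    (h : f m = f 0) : ∑ i ∈ range m, f (i + 1) = ∑ i ∈ range m, f i :=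
  add_right_cancel (((sum_range_succ' f m).symm.trans (sum_range_succ f m)).trans (by rw [h]))

section Converse

theorem coeff_eq_of_forall_sum_eq {F : Type*} [Field F] [Fintype F] {U V : Finset ℕ}
    {a b : ℕ → F} (hU : ∀ u ∈ U, u < Fintype.card F) (hV : ∀ v ∈ V, v < Fintype.card F)
    (h : ∀ x : F, ∑ u ∈ U, a u * x ^ u = ∑ v ∈ V, b v * x ^ v) (k : ℕ) :
    (if k ∈ U then a k else 0) = if k ∈ V then b k else 0 := by
  have hdeg : ∀ (W : Finset ℕ) (c : ℕ → F), (∀ w ∈ W, w < Fintype.card F) →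
      (∑ w ∈ W, C (c w) * X ^ w).natDegree < Fintype.card F := fun W c hW =>
    Nat.lt_of_le_pred Fintype.card_pos (natDegree_sum_le_of_forall_le _ _ fun w hw =>
      (natDegree_C_mul_X_pow_le _ _).trans (Nat.le_pred_of_lt (hW w hw)))
  have hpq := eq_of_natDegree_lt_card_of_eval_eq (∑ u ∈ U, C (a u) * X ^ u)
    (∑ v ∈ V, C (b v) * X ^ v) Function.injective_id (fun x => by simpa [eval_finsetSum] using h x)
    (max_lt (hdeg U a hU) (hdeg V b hV))
  simpa [finsetSum_coeff, coeff_C_mul_X_pow] using congrArg (coeff · k) hpq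

theorem exists_sum_mul_pow_two_pow_ne_zero {F : Type*} [Field F] [Fintype F] {m : ℕ}
    (hm : 0 < m) (hcard : 2 ^ (m - 1) < Fintype.card F) {γ : ℕ → F} (hγ : γ 0 ≠ 0) :
    ∃ a : F, ∑ i ∈ range m, γ i * a ^ 2 ^ i ≠ 0 := by
  set L : F[X] := ∑ i ∈ range m, C (γ i) * X ^ 2 ^ i
  have hL1 : L.coeff 1 = γ 0 := by
    simp [L, finsetSum_coeff, eq_comm (a := 1), hm]
  have hL : L ≠ 0 := fun h => hγ (by rw [← hL1, h, coeff_zero])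
  have hdeg : L.natDegree < Fintype.card F :=
    (natDegree_sum_le_of_forall_le _ _ fun i hi => (natDegree_C_mul_X_pow_le _ _).trans
      (Nat.pow_le_pow_right two_pos (Nat.le_pred_of_lt (mem_range.mp hi)))).trans_lt hcard
  by_contra! hall
  exact hL (eq_zero_of_natDegree_lt_card_of_eval_eq_zero L Function.injective_id
    (fun a => by simpa [L, eval_finsetSum] using hall a) hdeg)

/-- The coefficients of the codeword `x ↦ Tr(a x ^ s)` of `C(S)`, for `s ∈ S`. -/
def traceCoeff {R : Type*} [CommRing R] (n m s : ℕ) (a : R) (t : ℕ) : R :=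
  ∑ i ∈ range m, if 2 ^ i * s % n = t then a ^ 2 ^ i else 0

variable {m n : ℕ}

theorem traceCoeff_two_mul_mod {R : Type*} [CommRing R] [CharP R 2] (hm : 0 < m)
    (hn : n = 2 ^ m - 1) {s : ℕ} {a : R} (ha : a ^ 2 ^ m = a) {t : ℕ} (ht : t < n) :
    traceCoeff n m s a (2 * t % n) = traceCoeff n m s a t ^ 2 := by
  set f : ℕ → R := fun i => if 2 ^ i * s % n = 2 * t % n then a ^ 2 ^ i else 0
  have hperiod : f m = f 0 := by
    have : 2 ^ m * s % n = s % n := (two_pow_modEq_one hn).mul_right s |>.trans (by rw [one_mul])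
    simp only [f, this, ha, pow_zero, one_mul, pow_one]
  have hshift : ∀ i, f (i + 1) = (if 2 ^ i * s % n = t then a ^ 2 ^ i else 0) ^ 2 := by
    intro i
    have hinj : 2 * (2 ^ i * s % n) % n = 2 * t % n ↔ 2 ^ i * s % n = t :=
      (two_mul_mod_injOn hm hn).eq_iff (Nat.mod_lt _ (pos_of_eq_two_pow_sub_one hm hn)) ht
    simp only [f, two_pow_succ_mul_mod, hinj, ite_pow, ← pow_mul, ← pow_succ,
      zero_pow two_ne_zero]
  rw [traceCoeff, traceCoeff, CharTwo.sum_sq, ← sum_range_succ_eq_sum_range f hperiod]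
  exact sum_congr rfl fun i _ => hshift i

theorem derivCoeff_traceCoeff {R : Type*} [CommRing R] {S : Finset ℕ} (hS : IsExpSet n S)
    {s : ℕ} (hs : s ∈ S) (a β : R) (k : ℕ) :
    derivCoeff β S (traceCoeff n m s a) k = ∑ i ∈ range m,
      (if k ∈ Pset (2 ^ i * s % n) then β ^ (2 ^ i * s % n - k) else 0) * a ^ 2 ^ i := by
  simp only [derivCoeff, traceCoeff, sum_mul]
  rw [sum_comm]
  refine sum_congr rfl fun i _ => ?_
  simp only [ite_mul, zero_mul]
  rw [sum_ite_eq, if_pos (hS.two_pow_mul_mod_mem hs i), mul_comm, ite_mul, zero_mul]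

theorem Pset_subset_of_derivSet_subset {F : Type*} [Field F] [Fintype F] [CharP F 2]
    (hm : 0 < m) (hn : n = 2 ^ m - 1) (hF : Fintype.card F = 2 ^ m) {S S' : Finset ℕ}
    (hS : IsExpSet n S) (hS' : ∀ j ∈ S', j < n) {β : F} (hβ : β ≠ 0)
    (hsub : derivSet β (extCyclicCode n S) ⊆ extCyclicCode n S') {s : ℕ} (hs : s ∈ S) :
    Pset s ⊆ S' := by
  intro k hk
  have hsn := hS.1 s hs
  have hlt : ∀ u < n, u < Fintype.card F := fun u hu => by rw [hF]; omega
  set γ : ℕ → F := fun i => if k ∈ Pset (2 ^ i * s % n) then β ^ (2 ^ i * s % n - k) else 0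
  have hγ : γ 0 ≠ 0 := by simp [γ, Nat.mod_eq_of_lt hsn, hk, hβ]
  obtain ⟨a, ha⟩ := exists_sum_mul_pow_two_pow_ne_zero hm
    (hF ▸ Nat.pow_lt_pow_right one_lt_two (by omega)) hγ
  have hA : ∀ j ∈ S, traceCoeff n m s a (2 * j % n) = traceCoeff n m s a j ^ 2 :=
    fun j hj => traceCoeff_two_mul_mod hm hn (hF ▸ FiniteField.pow_card a) (hS.1 j hj)
  obtain ⟨B, -, hB⟩ := hsub ⟨_, ⟨_, hA, fun x => rfl⟩, rfl⟩
  have key := coeff_eq_of_forall_sum_eq (U := S.biUnion Pset) (V := S')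
    (fun u hu => by
      obtain ⟨j, hj, hu⟩ := mem_biUnion.mp hu
      exact hlt u ((lt_of_mem_Pset hu).trans (hS.1 j hj)))
    (fun v hv => hlt v (hS' v hv))
    (fun x => (sum_add_pow_sub_sum_pow (fun j hj => subset_biUnion_of_mem Pset hj) _ β x).symm.trans
      (hB x)) k
  rw [if_pos (mem_biUnion.mpr ⟨s, hs, hk⟩), derivCoeff_traceCoeff hS hs] at key
  by_contra hkS'
  rw [if_neg hkS'] at key
  exact ha key

end Converse

/-- Theorem 1: for an extended cyclic code `C` with exponent set `S_C`, the cyclic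
derivative descendants `D(C, β)` in all directions `β ∈ F^*` are the same code
`D(C)`, namely the extended cyclic code whose exponent set is
`∪_{s ∈ cr(S_C)} cc(P(s))`: for every direction `β ≠ 0`, this code contains all
the derivatives of codewords of `C` in direction `β`, and it is contained in
every extended cyclic code containing those derivatives. -/
theorem cyclicDD_of_extended_cyclic_code (m : ℕ) (hm : 0 < m)
    (n : ℕ) (hn : n = 2 ^ m - 1)
    {F : Type*} [Field F] [Fintype F] (hF : Fintype.card F = 2 ^ m)
    (S : Finset ℕ) (hS : IsExpSet n S) :
    ∀ β : F, β ≠ 0 →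
      derivSet β (extCyclicCode n S)
          ⊆ (extCyclicCode n ((crSet n m S).biUnion fun s => ccSet n m (Pset s)) :
              Set (F → F)) ∧
      ∀ S' : Finset ℕ, IsExpSet n S' →
        derivSet β (extCyclicCode n S) ⊆ (extCyclicCode n S' : Set (F → F)) →
        (extCyclicCode n ((crSet n m S).biUnion fun s => ccSet n m (Pset s)) :
            Set (F → F)) ⊆ extCyclicCode n S' := by
  have : CharP F 2 := charP_of_card_eq_prime_pow hF
  intro β hβ
  have hβn : β ^ n = 1 := by rw [hn, ← hF]; exact FiniteField.pow_card_sub_one_eq_one β hβ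
  refine ⟨derivSet_subset_extCyclicCode hm hn hS hβn, fun S' hS' hsub => ?_⟩
  exact extCyclicCode_mono hm hn (isExpSet_derivExpSet hm hn) hS'.1 <|
    derivExpSet_subset hS hS' fun s hs =>
      Pset_subset_of_derivSet_subset hm hn hF hS hS'.1 hβ hsub hs
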